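/- For every m ≥ 1 and every (a,b,c) ∈ ℂ^3, the polynomial γ_m = a^{m-1}((2m-1)c^m-a^m)h_1 + b^{m-1}(b^m-(2m-1)c^m)h_2 + c^{m-1}(c^m-(2m-1)a^m)h_3 + c^{m-1}((2m-1)b^m-c^m)h_4 + (2m-1)b^{m-1}(a^m-c^m)h_5 + (2m-1)a^{m-1}(c^m-b^m)h_6 vanishes, together with all its partial derivatives in x,y,z of order ≤ 2, at the point (x,y,z)=(a,b,c). -/
import Mathlib


open MvPolynomial

lemma pderiv_two' (i : Fin 3) : pderiv i (2 : MvPolynomial (Fin 3) ℂ) = 0 := by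
  have h : (2 : MvPolynomial (Fin 3) ℂ) = C 2 := (map_ofNat C 2).symm
  rw [h, pderiv_C]

lemma pderiv_three' (i : Fin 3) : pderiv i (3 : MvPolynomial (Fin 3) ℂ) = 0 := by
  have h : (3 : MvPolynomial (Fin 3) ℂ) = C 3 := (map_ofNat C 3).symm
  rw [h, pderiv_C]

lemma pderiv_four' (i : Fin 3) : pderiv i (4 : MvPolynomial (Fin 3) ℂ) = 0 := by
  have h : (4 : MvPolynomial (Fin 3) ℂ) = C 4 := (map_ofNat C 4).symm
  rw [h, pderiv_C]

/-- The degree-`(2m+1)` polynomial `γ_m` attached to a point `(a:b:c)`. -/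
noncomputable def gammaM (m : ℕ) (a b c : ℂ) : MvPolynomial (Fin 3) ℂ :=
  C (a ^ (m - 1) * (((2 * m - 1 : ℕ) : ℂ) * c ^ m - a ^ m)) *
    (X 0 * ((X 1) ^ (2 * m) - (X 2) ^ (2 * m))) +
  C (b ^ (m - 1) * (b ^ m - ((2 * m - 1 : ℕ) : ℂ) * c ^ m)) *
    (X 1 * ((X 0) ^ (2 * m) - (X 2) ^ (2 * m))) +
  C (c ^ (m - 1) * (c ^ m - ((2 * m - 1 : ℕ) : ℂ) * a ^ m)) *
    (X 2 * ((X 0) ^ m + (X 1) ^ m) * ((X 1) ^ m + (X 2) ^ m)) +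
  C (c ^ (m - 1) * (((2 * m - 1 : ℕ) : ℂ) * b ^ m - c ^ m)) *
    (X 2 * ((X 0) ^ m + (X 1) ^ m) * ((X 0) ^ m + (X 2) ^ m)) +
  C (((2 * m - 1 : ℕ) : ℂ) * b ^ (m - 1) * (a ^ m - c ^ m)) *
    (X 1 * ((X 0) ^ m + (X 2) ^ m) * ((X 1) ^ m + (X 2) ^ m)) +
  C (((2 * m - 1 : ℕ) : ℂ) * a ^ (m - 1) * (c ^ m - b ^ m)) *
    (X 0 * ((X 0) ^ m + (X 2) ^ m) * ((X 1) ^ m + (X 2) ^ m))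

set_option maxHeartbeats 4000000 in
/-- For every `m ≥ 1`, `γ_m` together with all its partial derivatives in
`x,y,z` of order ≤ 2 vanishes at `(x,y,z) = (a,b,c)`: the curve `γ_m = 0` has
multiplicity ≥ 3 at `(a:b:c)`. -/
theorem stmt17 (m : ℕ) (hm : 1 ≤ m) (a b c : ℂ) :
    eval ![a, b, c] (gammaM m a b c) = 0 ∧
    (∀ i : Fin 3, eval ![a, b, c] (pderiv i (gammaM m a b c)) = 0) ∧
    (∀ i j : Fin 3,
      eval ![a, b, c] (pderiv i (pderiv j (gammaM m a b c))) = 0) := by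
  obtain ⟨n, rfl⟩ : ∃ n, m = n + 1 := ⟨m - 1, (Nat.succ_pred_eq_of_pos hm).symm⟩
  rcases n with _ | k
  · refine ⟨?_, fun i => ?_, fun i j => ?_⟩
    · simp [gammaM, pderiv_mul, pderiv_X, pderiv_two', pderiv_three', pderiv_four']
      try ring
    · fin_cases i <;>
      · simp [gammaM, pderiv_mul, pderiv_X, pderiv_two', pderiv_three', pderiv_four']
        try ring
    · fin_cases i <;> fin_cases j <;>
      · simp [gammaM, pderiv_mul, pderiv_X, pderiv_two', pderiv_three', pderiv_four']
        try ring
  · have h1 : k + 1 + 1 - 1 = k + 1 := rfl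
    have h2 : 2 * (k + 1 + 1) = 2 * k + 4 := by ring
    have h3 : ((2 * (k + 1 + 1) - 1 : ℕ) : ℂ) = 2 * (k : ℂ) + 3 := by
      push_cast [Nat.mul_succ]; ring
    refine ⟨?_, ?_, ?_⟩
    · simp only [gammaM, h1, h2, h3]
      simp [pderiv_mul, pderiv_X, pderiv_two', pderiv_three', pderiv_four']
      try push_cast
      try ring
    · intro i
      fin_cases i <;>
      · simp only [gammaM, h1, h2, h3]
        simp [pderiv_mul, pderiv_X, pderiv_two', pderiv_three', pderiv_four']
        try push_cast
        try ring
    · intro i j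
      fin_cases i <;> fin_cases j <;>
      · simp only [gammaM, h1, h2, h3]
        simp [pderiv_mul, pderiv_X, pderiv_two', pderiv_three', pderiv_four']
        try push_cast
        try ring
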